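/- arXiv:1507.03895 — 5 statements merged into one kernel-verified Lean document; each statement's English description precedes it below -/
import Mathlib

section
/- Let a, b be positive real numbers with a + b = 1. Then for any 0 < ε < b, we have a·log(1 + ε/a) + b·log(1 − ε/b) ≤ −ε²/(2b). -/
open Real Finset

/-- The first two terms of `-log (1 - x) = ∑ xⁿ⁺¹ / (n + 1)`, all of whose terms are
nonnegative for `0 ≤ x`. -/
lemma Real.log_one_sub_le_neg_sub_sq_div_two {x : ℝ} (hx0 : 0 ≤ x) (hx1 : x < 1) :
    log (1 - x) ≤ -x - x ^ 2 / 2 := by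
  have hsum := hasSum_pow_div_log_of_abs_lt_one (abs_lt.2 ⟨by linarith, hx1⟩)
  have hpartial := sum_le_hasSum (range 2) (fun n _ => by positivity) hsum
  norm_num [sum_range_succ] at hpartial
  linarith

theorem stmt_0_general (a b ε : ℝ) (ha : 0 < a) (hb : 0 < b)
    (hε0 : 0 < ε) (hεb : ε < b) :
    a * Real.log (1 + ε / a) + b * Real.log (1 - ε / b) ≤ -ε ^ 2 / (2 * b) := by
  have hlog_add : log (1 + ε / a) ≤ ε / a := by
    linarith [log_le_sub_one_of_pos (by positivity : 0 < 1 + ε / a)]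
  have hlog_sub : log (1 - ε / b) ≤ -(ε / b) - (ε / b) ^ 2 / 2 :=
    log_one_sub_le_neg_sub_sq_div_two (by positivity) ((div_lt_one hb).2 hεb)
  calc a * log (1 + ε / a) + b * log (1 - ε / b)
      ≤ a * (ε / a) + b * (-(ε / b) - (ε / b) ^ 2 / 2) := by gcongr
    _ = -ε ^ 2 / (2 * b) := by field_simp; ring

theorem stmt_0 (a b ε : ℝ) (ha : 0 < a) (hb : 0 < b) (hab : a + b = 1)
    (hε0 : 0 < ε) (hεb : ε < b) :
    a * Real.log (1 + ε / a) + b * Real.log (1 - ε / b) ≤ -ε ^ 2 / (2 * b) :=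
  stmt_0_general a b ε ha hb hε0 hεb
end

section
/- Let ξ be a principal eigenvector (eigenvector corresponding to the largest-in-absolute-value eigenvalue) of a nonzero symmetric real matrix M. Then for any nonzero vector η, the angle satisfies ∠(η, Mη) ≤ 3·∠(η, ξ). -/
open Matrix

/-- The (absolute) angle between two vectors of `ℝ^p`:
`arccos (|⟨x,y⟩| / (‖x‖·‖y‖))`, with norms given by the Euclidean norm. -/
noncomputable def vecAngle {p : ℕ} (x y : Fin p → ℝ) : ℝ :=
  Real.arccos (|x ⬝ᵥ y| / (Real.sqrt (x ⬝ᵥ x) * Real.sqrt (y ⬝ᵥ y)))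

/-!
Write `c` for the cosine of `∠(η, ξ)`. Splitting `η = ⟨η, ξ⟩ ξ + w` with `w ⊥ ξ` (for unit `ξ`), the
cross terms of `⟨η, Mη⟩` vanish and `|⟨w, Mw⟩| ≤ |μ| ‖w‖²` because `|μ|` bounds the operator norm of
`M`; hence `|⟨η, Mη⟩| ≥ |μ| ‖η‖² (2c² - 1)`, while `‖Mη‖ ≤ |μ| ‖η‖`. So the cosine of `∠(η, Mη)` is
at least `2c² - 1 = cos (2 ∠(η, ξ))`, which gives even `∠(η, Mη) ≤ 2 ∠(η, ξ)`.
-/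

open Real WithLp
open scoped RealInnerProductSpace

theorem Real.arccos_two_mul_sq_sub_one {c : ℝ} (hc : 0 ≤ c) :
    arccos (2 * c ^ 2 - 1) = 2 * arccos c := by
  rcases le_or_gt c 1 with hc1 | hc1
  · have hcos : cos (2 * arccos c) = 2 * c ^ 2 - 1 := by
      rw [cos_two_mul, cos_arccos (by linarith) hc1]
    rw [← hcos, arccos_cos (mul_nonneg zero_le_two (arccos_nonneg c))]
    linarith [arccos_le_pi_div_two.mpr hc]
  · rw [arccos_eq_zero.mpr (by nlinarith), arccos_eq_zero.mpr hc1.le, mul_zero]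

namespace LinearMap.IsSymmetric

variable {E : Type*} [NormedAddCommGroup E] [InnerProductSpace ℝ E] {T : E →ₗ[ℝ] E}

theorem norm_apply_le_of_abs_eigenvalue_le [FiniteDimensional ℝ E] (hT : T.IsSymmetric)
    {r : ℝ} (hr : 0 ≤ r) (hev : ∀ (lam : ℝ) (v : E), v ≠ 0 → T v = lam • v → |lam| ≤ r)
    (v : E) : ‖T v‖ ≤ r * ‖v‖ := by
  let b := hT.eigenvectorBasis rfl
  have hcoord : ∀ i, ⟪b i, T v⟫ = hT.eigenvalues rfl i * ⟪b i, v⟫ := fun i => by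
    rw [← hT, hT.apply_eigenvectorBasis, real_inner_smul_left]
    rfl
  refine (sq_le_sq₀ (norm_nonneg _) (by positivity)).mp ?_
  rw [← b.sum_sq_inner_right, mul_pow, ← b.sum_sq_inner_right, Finset.mul_sum]
  refine Finset.sum_le_sum fun i _ => ?_
  rw [hcoord, mul_pow, ← sq_abs (hT.eigenvalues rfl i)]
  gcongr
  exact hev _ _ (b.orthonormal.ne_zero i) (hT.apply_eigenvectorBasis rfl i)

theorem le_abs_inner_apply_self (hT : T.IsSymmetric) {μ : ℝ}
    (hbound : ∀ v, ‖T v‖ ≤ |μ| * ‖v‖) {u : E} (hu : ‖u‖ = 1) (hTu : T u = μ • u) (η : E) :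
    |μ| * (2 * ⟪η, u⟫ ^ 2 - ‖η‖ ^ 2) ≤ |⟪η, T η⟫| := by
  set a := ⟪η, u⟫
  set w := η - a • u
  have huu : ⟪u, u⟫ = 1 := by rw [real_inner_self_eq_norm_sq, hu, one_pow]
  have hwu : ⟪w, u⟫ = 0 := by
    simp only [w, inner_sub_left, real_inner_smul_left, huu]; ring
  have huTw : ⟪u, T w⟫ = 0 := by
    rw [← hT, hTu, real_inner_smul_left, real_inner_comm, hwu, mul_zero]
  have hww : ‖w‖ ^ 2 = ‖η‖ ^ 2 - a ^ 2 := by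
    rw [← real_inner_self_eq_norm_sq, ← real_inner_self_eq_norm_sq]
    simp only [w, inner_sub_left, inner_sub_right, real_inner_smul_left, real_inner_smul_right,
      huu, real_inner_comm η u]
    ring
  have hsplit : ⟪η, T η⟫ = μ * a ^ 2 + ⟪w, T w⟫ := by
    have hη : η = a • u + w := by simp [w]
    rw [hη, map_add, map_smul, hTu]
    simp only [inner_add_left, inner_add_right, real_inner_smul_left, real_inner_smul_right,
      huu, huTw, hwu]
    ring
  have hwTw : |⟪w, T w⟫| ≤ |μ| * ‖w‖ ^ 2 :=
    calc |⟪w, T w⟫| ≤ ‖w‖ * ‖T w‖ := abs_real_inner_le_norm _ _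
      _ ≤ ‖w‖ * (|μ| * ‖w‖) := by gcongr; exact hbound w
      _ = |μ| * ‖w‖ ^ 2 := by ring
  rw [hww] at hwTw
  have hrev := abs_sub_abs_le_abs_sub (μ * a ^ 2) (-⟪w, T w⟫)
  rw [abs_neg, sub_neg_eq_add, abs_mul, abs_of_nonneg (sq_nonneg a), ← hsplit] at hrev
  linarith

theorem two_mul_sq_sub_one_le (hT : T.IsSymmetric) {μ : ℝ} (hμ : μ ≠ 0)
    (hbound : ∀ v, ‖T v‖ ≤ |μ| * ‖v‖) {ξ : E} (hξ : T ξ = μ • ξ) (η : E) :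
    2 * (|⟪η, ξ⟫| / (‖η‖ * ‖ξ‖)) ^ 2 - 1 ≤ |⟪η, T η⟫| / (‖η‖ * ‖T η‖) := by
  set c := |⟪η, ξ⟫| / (‖η‖ * ‖ξ‖)
  rcases le_or_gt (2 * c ^ 2 - 1) 0 with hc | hc
  · exact hc.trans (by positivity)
  have hc0 : c ≠ 0 := by rintro h; rw [h] at hc; norm_num at hc
  have hη : ‖η‖ ≠ 0 := fun h => hc0 (by simp [c, h])
  have hξ0 : ‖ξ‖ ≠ 0 := fun h => hc0 (by simp [c, h])
  set u := ‖ξ‖⁻¹ • ξ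
  have hu : ‖u‖ = 1 := by simp [u, norm_smul, hξ0]
  have hTu : T u = μ • u := by rw [map_smul, hξ, smul_comm]
  have hηu : ⟪η, u⟫ ^ 2 = c ^ 2 * ‖η‖ ^ 2 := by
    simp only [u, c, real_inner_smul_right, div_pow, sq_abs]
    field_simp
  have hlow : |μ| * ‖η‖ ^ 2 * (2 * c ^ 2 - 1) ≤ |⟪η, T η⟫| :=
    calc |μ| * ‖η‖ ^ 2 * (2 * c ^ 2 - 1) = |μ| * (2 * ⟪η, u⟫ ^ 2 - ‖η‖ ^ 2) := by
          rw [hηu]; ring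
      _ ≤ |⟪η, T η⟫| := hT.le_abs_inner_apply_self hbound hu hTu η
  have hTη : 0 < ‖T η‖ := by
    refine norm_pos_iff.mpr fun h => ?_
    rw [h, inner_zero_right, abs_zero] at hlow
    have : 0 < |μ| * ‖η‖ ^ 2 * (2 * c ^ 2 - 1) := by positivity
    linarith
  rw [le_div_iff₀ (by positivity)]
  calc (2 * c ^ 2 - 1) * (‖η‖ * ‖T η‖) ≤ (2 * c ^ 2 - 1) * (‖η‖ * (|μ| * ‖η‖)) := by
        gcongr; exact hbound η
    _ = |μ| * ‖η‖ ^ 2 * (2 * c ^ 2 - 1) := by ring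
    _ ≤ _ := hlow

end LinearMap.IsSymmetric

theorem vecAngle_eq_arccos {p : ℕ} (x y : Fin p → ℝ) :
    vecAngle x y = arccos (|⟪toLp 2 x, toLp 2 y⟫| / (‖toLp 2 x‖ * ‖toLp 2 y‖)) := by
  simp only [vecAngle, norm_eq_sqrt_real_inner, EuclideanSpace.inner_toLp_toLp, star_trivial,
    dotProduct_comm]

theorem stmt_1_general {p : ℕ} (M : Matrix (Fin p) (Fin p) ℝ)
    (hMsymm : Mᵀ = M) (hM0 : M ≠ 0)
    (ξ : Fin p → ℝ) (μ : ℝ) (hξ : M.mulVec ξ = μ • ξ)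
    (hprincipal : ∀ (lam : ℝ) (v : Fin p → ℝ), v ≠ 0 → M.mulVec v = lam • v → |lam| ≤ |μ|)
    (η : Fin p → ℝ) :
    vecAngle η (M.mulVec η) ≤ 3 * vecAngle η ξ := by
  set T := toEuclideanLin M
  have hT : T.IsSymmetric :=
    isSymmetric_toEuclideanLin_iff.mpr ((conjTranspose_eq_transpose_of_trivial M).trans hMsymm)
  have hbound : ∀ v, ‖T v‖ ≤ |μ| * ‖v‖ :=
    hT.norm_apply_le_of_abs_eigenvalue_le (abs_nonneg μ) fun lam v hv hTv =>
      hprincipal lam (ofLp v) (by simpa using hv) (congrArg ofLp hTv)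
  have hμ : μ ≠ 0 := by
    rintro rfl
    refine hM0 (toEuclideanLin.map_eq_zero_iff.mp (LinearMap.ext fun v => ?_))
    simpa using hbound v
  have hTξ : T (toLp 2 ξ) = μ • toLp 2 ξ := congrArg (toLp 2) hξ
  rw [vecAngle_eq_arccos, vecAngle_eq_arccos]
  set c := |⟪toLp 2 η, toLp 2 ξ⟫| / (‖toLp 2 η‖ * ‖toLp 2 ξ‖)
  calc arccos _ ≤ arccos (2 * c ^ 2 - 1) :=
        arccos_le_arccos (hT.two_mul_sq_sub_one_le hμ hbound hTξ (toLp 2 η))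
    _ = 2 * arccos c := arccos_two_mul_sq_sub_one (by positivity)
    _ ≤ 3 * arccos c := by linarith [arccos_nonneg c]

theorem stmt_1 {p : ℕ} (M : Matrix (Fin p) (Fin p) ℝ)
    (hMsymm : Mᵀ = M) (hM0 : M ≠ 0)
    (ξ : Fin p → ℝ) (μ : ℝ) (hξ0 : ξ ≠ 0) (hξ : M.mulVec ξ = μ • ξ)
    (hprincipal : ∀ (lam : ℝ) (v : Fin p → ℝ), v ≠ 0 → M.mulVec v = lam • v → |lam| ≤ |μ|)
    (η : Fin p → ℝ) (hη : η ≠ 0) :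
    vecAngle η (M.mulVec η) ≤ 3 * vecAngle η ξ :=
  stmt_1_general M hMsymm hM0 ξ μ hξ hprincipal η
end

section
/- Let y₁, …, y_n be i.i.d. uniform on [0,1] with n = H·c, and let y_{(kc)} be the (kc)-th order statistic for 1 ≤ k ≤ H − 1. For all H, c sufficiently large, there exists an absolute constant C > 0 such that for any ε > 1/(Hc − 1), P(y_{(kc)} > k/H + ε) ≤ C·H·√(Hc + 1)·exp(−(Hc + 1)·ε²/2). -/
/-!
If `y_(kc) > t := k/H + ε`, then fewer than `kc` of the `Hc` samples lie in `[0, t]`. That number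
is a sum of `Hc` independent Bernoulli variables with mean `t`, so its expected value is
`kc + Hcε`, and Hoeffding's inequality bounds the probability of falling short by `Hcε` with
`exp (-2Hcε²)`, which is below the claimed bound with `C = 1`; this replaces the Beta-density and
Stirling estimates of the paper. When `t > 1` the event is null, as almost surely no sample
exceeds `1`.
-/

open MeasureTheory ProbabilityTheory

/-- The `k`-th order statistic (1-indexed) of a finite sample `v : Fin n → ℝ`:
the `k`-th smallest value. -/
noncomputable def orderStat {n : ℕ} (v : Fin n → ℝ) (k : ℕ) : ℝ :=
  ((List.ofFn v).insertionSort (· ≤ ·)).getD (k - 1) 0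

theorem List.Pairwise.countP_le_le_of_lt_getElem {α : Type*} [LinearOrder α] {l : List α}
    (hl : l.Pairwise (· ≤ ·)) {j : ℕ} (hj : j < l.length) {t : α} (ht : t < l[j]) :
    l.countP (· ≤ t) ≤ j := by
  have htail : (l.drop j).countP (· ≤ t) = 0 := by
    have hsorted := hl.sublist (List.drop_sublist j l)
    rw [List.drop_eq_getElem_cons hj, List.pairwise_cons] at hsorted
    rw [List.drop_eq_getElem_cons hj, List.countP_eq_zero]
    intro x hx
    rcases List.mem_cons.1 hx with rfl | hx
    · simpa using ht
    · simpa using ht.trans_le (hsorted.1 x hx)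
  calc l.countP (· ≤ t) = (l.take j).countP (· ≤ t) + (l.drop j).countP (· ≤ t) := by
        rw [← List.countP_append, List.take_append_drop]
    _ ≤ j := by
        rw [htail, add_zero]
        exact List.countP_le_length.trans (List.length_take_le _ _)

theorem card_filter_le_eq_countP_ofFn {α : Type*} [LinearOrder α] {n : ℕ} (v : Fin n → α)
    (t : α) : (Finset.univ.filter fun i => v i ≤ t).card = (List.ofFn v).countP (· ≤ t) := by
  rw [← Multiset.coe_countP, ← Fin.univ_val_map, Multiset.countP_map, Finset.card_def,
    Finset.filter_val]

theorem card_filter_le_lt_of_lt_orderStat {n m : ℕ} (v : Fin n → ℝ) (hm : 1 ≤ m) {t : ℝ}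
    (ht : t < orderStat v m) : (Finset.univ.filter fun i => v i ≤ t).card < m := by
  rcases le_or_gt m n with hmn | hnm
  · set l := (List.ofFn v).insertionSort (· ≤ ·)
    have hidx : m - 1 < l.length := by simp [l]; omega
    rw [orderStat, List.getD_eq_getElem _ _ hidx] at ht
    have hsorted : l.Pairwise (· ≤ ·) := List.pairwise_insertionSort _ _
    rw [card_filter_le_eq_countP_ofFn,
      ← (List.perm_insertionSort (· ≤ ·) (List.ofFn v)).countP_eq]
    exact (hsorted.countP_le_le_of_lt_getElem hidx ht).trans_lt (by omega)
  · exact (Finset.card_filter_le _ _).trans_lt (by simpa using hnm)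

theorem exists_lt_of_lt_orderStat {n m : ℕ} (v : Fin n → ℝ) (hm : 1 ≤ m) (hmn : m ≤ n) {t : ℝ}
    (ht : t < orderStat v m) : ∃ i, t < v i := by
  by_contra! hle
  have := card_filter_le_lt_of_lt_orderStat v hm ht
  simp [hle] at this
  omega

namespace MeasureTheory.pdf.IsUniform

variable {Ω : Type*} [MeasurableSpace Ω] {μ : Measure Ω} {X : Ω → ℝ}

theorem measure_preimage_Icc_zero_one (hX : IsUniform X (Set.Icc 0 1) μ) {A : Set ℝ}
    (hA : MeasurableSet A) : μ (X ⁻¹' A) = volume (Set.Icc 0 1 ∩ A) := by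
  rw [hX.measure_preimage (by simp) (by simp) hA, Real.volume_Icc]
  simp

theorem measureReal_le (hX : IsUniform X (Set.Icc 0 1) μ) {t : ℝ} (ht₀ : 0 ≤ t) (ht₁ : t ≤ 1) :
    μ.real {ω | X ω ≤ t} = t := by
  rw [measureReal_def, show {ω | X ω ≤ t} = X ⁻¹' Set.Iic t from rfl,
    hX.measure_preimage_Icc_zero_one measurableSet_Iic,
    show Set.Icc 0 1 ∩ Set.Iic t = Set.Icc 0 t by ext; simp; grind, Real.volume_Icc]
  simpa using ht₀

theorem measure_gt (hX : IsUniform X (Set.Icc 0 1) μ) {t : ℝ} (ht : 1 ≤ t) :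
    μ {ω | t < X ω} = 0 := by
  rw [show {ω | t < X ω} = X ⁻¹' Set.Ioi t from rfl,
    hX.measure_preimage_Icc_zero_one measurableSet_Ioi,
    show Set.Icc 0 1 ∩ Set.Ioi t = ∅ by ext; simp; grind, measure_empty]

end MeasureTheory.pdf.IsUniform

theorem measureReal_sub_card_filter_ge_le {Ω ι : Type*} [MeasurableSpace Ω] {μ : Measure Ω}
    [IsProbabilityMeasure μ] [Fintype ι] {X : ι → Ω → ℝ} (hX : ∀ i, Measurable (X i))
    (hind : iIndepFun X μ) {t p : ℝ} (hp : ∀ i, μ.real {ω | X i ω ≤ t} = p) {δ : ℝ}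
    (hδ : 0 ≤ δ) :
    μ.real {ω | δ ≤ Fintype.card ι * p - (Finset.univ.filter fun i => X i ω ≤ t).card} ≤
      Real.exp (-2 * δ ^ 2 / Fintype.card ι) := by
  set B : ι → Ω → ℝ := fun i ω => p - (Set.Iic t).indicator 1 (X i ω)
  have hB_indep : iIndepFun B μ :=
    hind.comp (fun _ x => p - (Set.Iic t).indicator 1 x)
      (fun _ => measurable_const.sub (measurable_one.indicator measurableSet_Iic))
  have hB_subG (i : ι) (_ : i ∈ Finset.univ) :
      HasSubgaussianMGF (B i) ((‖p - (p - 1)‖₊ / 2) ^ 2) μ := by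
    have hB_indicator : (fun ω => (Set.Iic t).indicator (1 : ℝ → ℝ) (X i ω))
        = (X i ⁻¹' Set.Iic t).indicator 1 := rfl
    apply hasSubgaussianMGF_of_mem_Icc_of_integral_eq_zero
    · exact (measurable_const.sub
        ((measurable_one.indicator measurableSet_Iic).comp (hX i))).aemeasurable
    · refine ae_of_all _ fun ω => ?_
      simp only [B, Set.mem_Icc, sub_le_sub_iff_left, sub_le_self_iff]
      exact ⟨Set.indicator_le_self' (fun _ _ => zero_le_one) _,
        Set.indicator_nonneg (fun _ _ => zero_le_one) _⟩
    · simp only [B]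
      rw [integral_sub (integrable_const p), integral_const, hB_indicator,
        integral_indicator_one ((hX i) measurableSet_Iic)]
      · rw [← hp i, probReal_univ, one_smul]; exact sub_self _
      · exact (integrable_const 1).indicator ((hX i) measurableSet_Iic)
  have hsum (ω : Ω) :
      ∑ i, B i ω = Fintype.card ι * p - (Finset.univ.filter fun i => X i ω ≤ t).card := by
    simp [B, Finset.sum_sub_distrib, Set.indicator]
  have hoeffding := HasSubgaussianMGF.measure_sum_ge_le_of_iIndepFun hB_indep hB_subG hδ
  simp only [hsum] at hoeffding
  convert hoeffding using 2
  simp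
  ring

theorem measure_orderStat_gt_le_exp {Ω : Type*} [MeasurableSpace Ω] {μ : Measure Ω}
    [IsProbabilityMeasure μ] {n m : ℕ} {y : Fin n → Ω → ℝ} (hy : ∀ i, Measurable (y i))
    (hind : iIndepFun y μ) (hunif : ∀ i, pdf.IsUniform (y i) (Set.Icc (0 : ℝ) 1) μ)
    (hm : 1 ≤ m) (hmn : m ≤ n) {δ : ℝ} (hδ : 0 ≤ δ) :
    μ {ω | (m : ℝ) / n + δ < orderStat (fun i => y i ω) m} ≤
      ENNReal.ofReal (Real.exp (-2 * n * δ ^ 2)) := by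
  set t : ℝ := m / n + δ
  rcases le_or_gt t 1 with ht | ht
  · have hn : (0 : ℝ) < n := by exact_mod_cast hm.trans hmn
    have hcount (ω : Ω) (hω : t < orderStat (fun i => y i ω) m) :
        n * δ ≤ Fintype.card (Fin n) * t - (Finset.univ.filter fun i => y i ω ≤ t).card := by
      have hlt : ((Finset.univ.filter fun i => y i ω ≤ t).card : ℝ) < m := by
        exact_mod_cast card_filter_le_lt_of_lt_orderStat _ hm hω
      have hnt : n * t = m + n * δ := by simp only [t]; field_simp
      rw [Fintype.card_fin]
      linarith
    calc μ {ω | t < orderStat (fun i => y i ω) m}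
        ≤ μ {ω | n * δ ≤ Fintype.card (Fin n) * t -
            (Finset.univ.filter fun i => y i ω ≤ t).card} := measure_mono hcount
      _ = ENNReal.ofReal (μ.real {ω | n * δ ≤ Fintype.card (Fin n) * t -
            (Finset.univ.filter fun i => y i ω ≤ t).card}) := (ofReal_measureReal).symm
      _ ≤ ENNReal.ofReal (Real.exp (-2 * (n * δ) ^ 2 / Fintype.card (Fin n))) :=
          ENNReal.ofReal_le_ofReal <| measureReal_sub_card_filter_ge_le hy hind
            (fun i => (hunif i).measureReal_le (by positivity) ht) (by positivity)
      _ = ENNReal.ofReal (Real.exp (-2 * n * δ ^ 2)) := by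
          rw [Fintype.card_fin]; field_simp
  · calc μ {ω | t < orderStat (fun i => y i ω) m}
        ≤ μ (⋃ i, {ω | t < y i ω}) :=
          measure_mono fun ω hω => Set.mem_iUnion.2 (exists_lt_of_lt_orderStat _ hm hmn hω)
      _ = 0 := measure_iUnion_null fun i => (hunif i).measure_gt ht.le
      _ ≤ _ := zero_le

theorem stmt_9 :
    ∃ C : ℝ, 0 < C ∧ ∃ H₀ c₀ : ℕ, ∀ H c : ℕ, H₀ ≤ H → c₀ ≤ c →
      ∀ (Ω : Type) (_ : MeasurableSpace Ω) (μ : Measure Ω), IsProbabilityMeasure μ →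
      ∀ (y : Fin (H * c) → Ω → ℝ), (∀ i, Measurable (y i)) →
        iIndepFun y μ →
        (∀ i, pdf.IsUniform (y i) (Set.Icc (0 : ℝ) 1) μ) →
        ∀ k : ℕ, 1 ≤ k → k ≤ H - 1 →
        ∀ ε : ℝ, 1 / ((H : ℝ) * c - 1) < ε →
          μ {ω | (k : ℝ) / H + ε < orderStat (fun i => y i ω) (k * c)} ≤
            ENNReal.ofReal (C * H * Real.sqrt ((H : ℝ) * c + 1) *
              Real.exp (-((H : ℝ) * c + 1) * ε ^ 2 / 2)) := by
  refine ⟨1, one_pos, 0, 1, ?_⟩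
  intro H c _ hc Ω _ μ _ y hy hind hunif k hk hkH ε hε
  have hH : (2 : ℝ) ≤ H := by exact_mod_cast (by omega : 2 ≤ H)
  have hc₁ : (1 : ℝ) ≤ c := by exact_mod_cast hc
  have hε₀ : 0 < ε := lt_trans (by apply one_div_pos.2; nlinarith) hε
  have htail := measure_orderStat_gt_le_exp hy hind hunif (m := k * c)
    (Nat.mul_pos hk (by omega)) (Nat.mul_le_mul_right c (by omega)) hε₀.le
  rw [show ((k * c : ℕ) : ℝ) / (H * c : ℕ) = k / H by push_cast; field_simp] at htail
  refine htail.trans (ENNReal.ofReal_le_ofReal ?_)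
  have hsqrt : 1 ≤ Real.sqrt ((H : ℝ) * c + 1) := Real.one_le_sqrt.2 (by nlinarith)
  calc Real.exp (-2 * ((H * c : ℕ) : ℝ) * ε ^ 2)
      ≤ Real.exp (-((H : ℝ) * c + 1) * ε ^ 2 / 2) := by
        have h3N : 0 ≤ 3 * (H : ℝ) * c - 1 := by nlinarith
        push_cast; exact Real.exp_le_exp.2 (by nlinarith [mul_nonneg h3N (sq_nonneg ε)])
    _ ≤ 1 * H * Real.sqrt ((H : ℝ) * c + 1) * Real.exp (-((H : ℝ) * c + 1) * ε ^ 2 / 2) :=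
        le_mul_of_one_le_left (Real.exp_pos _).le (by nlinarith)
end

section
/- Let y₁, …, y_n be i.i.d. samples from a continuous distribution on ℝ with density f, where n = H·c. Define S₁ = (−∞, y_{(c)}], S_h = (y_{((h−1)c)}, y_{(hc)}] for 2 ≤ h ≤ H − 1, S_H = (y_{((H−1)c)}, ∞), and δ_h = ∫_{S_h} f(y) dy. Then there exists an absolute constant C > 0 such that for any ε > 4/(Hc − 1) and sufficiently large H and c, P(∃ h with |δ_h − 1/H| > ε) ≤ C·H²·√(Hc + 1)·exp(−(Hc + 1)·ε²/32). -/
open MeasureTheory ProbabilityTheory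

/-- The `h`-th slice (1-indexed, `1 ≤ h ≤ H`) determined by the order statistics
of the sample `v` of size `H * c`: `S₁ = (-∞, v_{(c)}]`,
`S_h = (v_{((h-1)c)}, v_{(hc)}]` for `2 ≤ h ≤ H - 1`, and `S_H = (v_{((H-1)c)}, ∞)`. -/
noncomputable def sirSlice (H c : ℕ) (v : Fin (H * c) → ℝ) (h : ℕ) : Set ℝ :=
  if h = 1 then Set.Iic (orderStat v c)
  else if h = H then Set.Ioi (orderStat v ((H - 1) * c))
  else Set.Ioc (orderStat v ((h - 1) * c)) (orderStat v (h * c))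

/-! With `F` the CDF of the sample, the mass of the `h`-th slice is `F(y_(hc)) - F(y_((h-1)c))`
(with `F(y_(0)) = 0` and `F(y_(Hc)) = 1` at the ends), so it suffices that every `F(y_(k))`,
`k = jc`, lies within `ε / 2` of `k / n`. Since `F` is continuous, `F(y_(k)) > k / n + s` forces
`y_(k) > t` for the quantile `F t = k / n + s`, i.e. fewer than `k` sample points lie in `(-∞, t]`;
this count is a sum of `n` independent Bernoulli(`F t`) variables, so Hoeffding's inequality bounds
the probability by `exp (-2 n s²)`, and likewise for the lower tail. A union bound over the `2H`
tails gives `2 H exp (-n ε² / 2)`, well within the claimed bound. -/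

open Finset Real

theorem getElem_le_iff_lt_countP_of_pairwise {α : Type*} [LinearOrder α] {l : List α}
    (hl : l.Pairwise (· ≤ ·)) {j : ℕ} (hj : j < l.length) (t : α) :
    l[j] ≤ t ↔ j < l.countP (· ≤ t) := by
  have hsorted := List.pairwise_iff_getElem.mp hl
  constructor
  · intro hjt
    have hprefix : (l.take (j + 1)).countP (· ≤ t) = j + 1 := by
      rw [List.countP_eq_length.mpr, List.length_take_of_le hj]
      intro a ha
      obtain ⟨i, hi, rfl⟩ := List.getElem_of_mem ha
      rw [List.length_take_of_le hj] at hi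
      rw [List.getElem_take, decide_eq_true_eq]
      rcases Nat.lt_succ_iff_lt_or_eq.mp hi with hij | rfl
      · exact (hsorted i j _ hj hij).trans hjt
      · exact hjt
    have := (List.take_sublist (j + 1) l).countP_le (p := (· ≤ t))
    omega
  · intro hcount
    by_contra! htj
    have hsuffix : (l.drop j).countP (· ≤ t) = 0 := by
      rw [List.countP_eq_zero]
      intro a ha
      obtain ⟨i, hi, rfl⟩ := List.getElem_of_mem ha
      rw [List.getElem_drop, decide_eq_true_eq, not_le]
      rcases Nat.eq_zero_or_pos i with rfl | hi0
      · simpa using htj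
      · exact htj.trans_le (hsorted j (j + i) hj (by simp at hi; omega) (by omega))
    have hsplit := List.countP_append (l₁ := l.take j) (l₂ := l.drop j) (p := (· ≤ t))
    rw [List.take_append_drop, hsuffix] at hsplit
    have := List.countP_le_length (p := (· ≤ t)) (l := l.take j)
    simp only [List.length_take] at this
    omega

theorem countP_ofFn_eq_card_filter {α : Type*} {n : ℕ} (v : Fin n → α) (p : α → Prop)
    [DecidablePred p] : (List.ofFn v).countP (fun x => decide (p x)) = #{i | p (v i)} := by
  induction n with
  | zero => simp
  | succ m ih =>
    rw [List.ofFn_succ, List.countP_cons, ih, Fin.card_filter_univ_succ]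
    split_ifs <;> simp_all

theorem orderStat_le_iff {n : ℕ} (v : Fin n → ℝ) {k : ℕ} (hk : 1 ≤ k) (hkn : k ≤ n) (t : ℝ) :
    orderStat v k ≤ t ↔ k ≤ #{i | v i ≤ t} := by
  have hlen : ((List.ofFn v).insertionSort (· ≤ ·)).length = n := by simp
  rw [orderStat, List.getD_eq_getElem _ _ (by omega),
    getElem_le_iff_lt_countP_of_pairwise (List.pairwise_insertionSort _ _),
    (List.perm_insertionSort _ _).countP_eq, countP_ofFn_eq_card_filter]
  omega

theorem orderStat_mono {n : ℕ} (v : Fin n → ℝ) {k k' : ℕ} (hk : 1 ≤ k) (hkk' : k ≤ k')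
    (hk'n : k' ≤ n) : orderStat v k ≤ orderStat v k' :=
  (orderStat_le_iff v hk (hkk'.trans hk'n) _).2 <|
    hkk'.trans ((orderStat_le_iff v (hk.trans hkk') hk'n _).1 le_rfl)

theorem measurableSet_sirSlice (H c : ℕ) (v : Fin (H * c) → ℝ) (h : ℕ) :
    MeasurableSet (sirSlice H c v h) := by
  unfold sirSlice
  split_ifs
  exacts [measurableSet_Iic, measurableSet_Ioi, measurableSet_Ioc]

theorem continuous_cdf (ν : Measure ℝ) [IsProbabilityMeasure ν] [NullSingletonClass ν] :
    Continuous (cdf ν) := by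
  refine continuous_iff_continuousAt.2 fun a => ?_
  rw [(monotone_cdf ν).continuousAt_iff_leftLim_eq_rightLim, (cdf ν).rightLim_eq]
  have hatom := (cdf ν).measure_singleton a
  rw [measure_cdf, measure_singleton, eq_comm, ENNReal.ofReal_eq_zero, sub_nonpos] at hatom
  exact le_antisymm (Monotone.leftLim_le (monotone_cdf ν) le_rfl) hatom

theorem exists_cdf_eq (ν : Measure ℝ) [IsProbabilityMeasure ν] [NullSingletonClass ν] {p : ℝ}
    (hp0 : 0 < p) (hp1 : p < 1) : ∃ t, cdf ν t = p :=
  mem_range_of_exists_le_of_exists_ge (continuous_cdf ν)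
    (((tendsto_cdf_atBot ν).eventually (eventually_le_nhds hp0)).exists)
    (((tendsto_cdf_atTop ν).eventually (eventually_ge_nhds hp1)).exists)

theorem measureReal_withDensity_ofReal {α : Type*} [MeasurableSpace α] {μ : Measure α}
    {f : α → ℝ} {S : Set α} (hf : AEStronglyMeasurable f (μ.restrict S))
    (hf0 : 0 ≤ᵐ[μ.restrict S] f) (hS : MeasurableSet S) :
    (μ.withDensity fun x => ENNReal.ofReal (f x)).real S = ∫ x in S, f x ∂μ := by
  rw [measureReal_def, withDensity_apply _ hS, integral_eq_lintegral_of_nonneg_ae hf0 hf]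

theorem measureReal_card_mem_ge_le {Ω ι : Type*} [MeasurableSpace Ω] {μ : Measure Ω}
    [IsProbabilityMeasure μ] [Fintype ι] {y : ι → Ω → ℝ} (hy : ∀ i, Measurable (y i))
    (hind : iIndepFun y μ) {ν : Measure ℝ} (hmap : ∀ i, μ.map (y i) = ν) {A : Set ℝ}
    [DecidablePred (· ∈ A)] (hA : MeasurableSet A) {s : ℝ} (hs : 0 ≤ s) :
    μ.real {ω | Fintype.card ι * ν.real A + s ≤ #{i | y i ω ∈ A}} ≤
      exp (-2 * s ^ 2 / Fintype.card ι) := by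
  set X : ι → Ω → ℝ := fun i ω => A.indicator 1 (y i ω) - ν.real A
  have hX_subG : ∀ i, HasSubgaussianMGF (X i) (1 / 4) μ := by
    intro i
    have hmean : ∫ ω, A.indicator (1 : ℝ → ℝ) (y i ω) ∂μ = ν.real A := by
      rw [← integral_map (hy i).aemeasurable
        (stronglyMeasurable_one.indicator hA).aestronglyMeasurable, hmap i,
        integral_indicator_one hA]
    have h_mem : ∀ ω, A.indicator (1 : ℝ → ℝ) (y i ω) ∈ Set.Icc 0 1 := fun ω => by
      by_cases h : y i ω ∈ A <;> simp [h]
    have := hasSubgaussianMGF_of_mem_Icc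
      ((measurable_one.indicator hA).comp (hy i)).aemeasurable (ae_of_all μ h_mem)
    convert this using 1
    · simp only [X, Function.comp_apply, hmean]
    · norm_num
  have hX_indep : iIndepFun X μ :=
    hind.comp (fun _ x => A.indicator 1 x - ν.real A)
      fun _ => (measurable_one.indicator hA).sub_const _
  have hsum : ∀ ω, ∑ i, X i ω = #{i | y i ω ∈ A} - Fintype.card ι * ν.real A := by
    intro ω
    simp [X, Finset.sum_sub_distrib, Set.indicator_apply]
  calc μ.real {ω | Fintype.card ι * ν.real A + s ≤ #{i | y i ω ∈ A}}
      = μ.real {ω | s ≤ ∑ i, X i ω} := by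
        simp only [hsum, le_sub_iff_add_le']
    _ ≤ exp (-s ^ 2 / (2 * ∑ _i : ι, (1 / 4 : NNReal))) :=
        HasSubgaussianMGF.measure_sum_ge_le_of_iIndepFun hX_indep (fun i _ => hX_subG i) hs
    _ = exp (-2 * s ^ 2 / Fintype.card ι) := by
        congr 1; norm_num; ring

section OrderStatisticTails

variable {Ω : Type*} [MeasurableSpace Ω] {μ : Measure Ω} [IsProbabilityMeasure μ] {n : ℕ}
  {y : Fin n → Ω → ℝ} {ν : Measure ℝ} [IsProbabilityMeasure ν] [NullSingletonClass ν]
  {k : ℕ} {s : ℝ}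

theorem measureReal_cdf_orderStat_gt_le (hy : ∀ i, Measurable (y i)) (hind : iIndepFun y μ)
    (hmap : ∀ i, μ.map (y i) = ν) (hk : 1 ≤ k) (hkn : k ≤ n) (hs : 0 < s) :
    μ.real {ω | k / n + s < cdf ν (orderStat (fun i => y i ω) k)} ≤ exp (-2 * n * s ^ 2) := by
  have hn : (0 : ℝ) < n := Nat.cast_pos.mpr (by omega)
  rcases le_or_gt 1 (k / n + s) with h_one | h_lt_one
  · have h_empty : {ω | k / n + s < cdf ν (orderStat (fun i => y i ω) k)} = ∅ :=
      Set.eq_empty_of_forall_notMem fun ω hω => (cdf_le_one ν _).not_gt (h_one.trans_lt hω)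
    rw [h_empty, measureReal_empty]
    positivity
  obtain ⟨t, ht⟩ := exists_cdf_eq ν (by positivity) h_lt_one
  have h_sub : {ω | k / n + s < cdf ν (orderStat (fun i => y i ω) k)} ⊆
      {ω | Fintype.card (Fin n) * ν.real (Set.Ioi t) + n * s ≤ #{i | y i ω ∈ Set.Ioi t}} := by
    intro ω hω
    have h_above : t < orderStat (fun i => y i ω) k := by
      by_contra! h
      exact hω.not_ge (ht ▸ monotone_cdf ν h)
    have h_few : #{i | y i ω ≤ t} < k :=
      not_le.mp ((orderStat_le_iff _ hk hkn t).not.mp h_above.not_ge)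
    have h_card := card_filter_add_card_filter_not (s := univ) (fun i => y i ω ≤ t)
    have h_Ioi : ν.real (Set.Ioi t) = 1 - (k / n + s) := by
      rw [← Set.compl_Iic, probReal_compl_eq_one_sub measurableSet_Iic, ← cdf_eq_real, ht]
    simp only [Set.mem_ofPred_eq, Set.mem_Ioi, not_le, card_univ, Fintype.card_fin] at h_card ⊢
    rw [h_Ioi, mul_sub, mul_add, mul_div_cancel₀ _ hn.ne']
    have : (#{i | y i ω ≤ t} : ℝ) + 1 ≤ k := by exact_mod_cast h_few
    have : (#{i | y i ω ≤ t} : ℝ) + #{i | t < y i ω} = n := by exact_mod_cast h_card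
    linarith
  calc _ ≤ _ := measureReal_mono h_sub
    _ ≤ exp (-2 * (n * s) ^ 2 / Fintype.card (Fin n)) :=
      measureReal_card_mem_ge_le hy hind hmap measurableSet_Ioi (by positivity)
    _ = exp (-2 * n * s ^ 2) := by
      rw [Fintype.card_fin]; congr 1; field_simp

theorem measureReal_cdf_orderStat_lt_le (hy : ∀ i, Measurable (y i)) (hind : iIndepFun y μ)
    (hmap : ∀ i, μ.map (y i) = ν) (hk : 1 ≤ k) (hkn : k ≤ n) (hs : 0 < s) :
    μ.real {ω | cdf ν (orderStat (fun i => y i ω) k) < k / n - s} ≤ exp (-2 * n * s ^ 2) := by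
  have hn : (0 : ℝ) < n := Nat.cast_pos.mpr (by omega)
  rcases le_or_gt (k / n - s) 0 with h_zero | h_pos
  · have h_empty : {ω | cdf ν (orderStat (fun i => y i ω) k) < k / n - s} = ∅ :=
      Set.eq_empty_of_forall_notMem fun ω hω => (cdf_nonneg ν _).not_gt (hω.trans_le h_zero)
    rw [h_empty, measureReal_empty]
    positivity
  have hkn' : (k : ℝ) / n ≤ 1 := (div_le_one hn).2 (by exact_mod_cast hkn)
  obtain ⟨t, ht⟩ := exists_cdf_eq ν h_pos (by linarith)
  have h_sub : {ω | cdf ν (orderStat (fun i => y i ω) k) < k / n - s} ⊆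
      {ω | Fintype.card (Fin n) * ν.real (Set.Iic t) + n * s ≤ #{i | y i ω ∈ Set.Iic t}} := by
    intro ω hω
    have h_below : orderStat (fun i => y i ω) k ≤ t := by
      by_contra! h
      exact hω.not_ge (ht ▸ monotone_cdf ν h.le)
    have h_many : k ≤ #{i | y i ω ≤ t} := (orderStat_le_iff _ hk hkn t).mp h_below
    simp only [Set.mem_ofPred_eq, Set.mem_Iic, Fintype.card_fin]
    rw [← cdf_eq_real, ht, mul_sub, mul_div_cancel₀ _ hn.ne', sub_add_cancel]
    exact_mod_cast h_many
  calc _ ≤ _ := measureReal_mono h_sub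
    _ ≤ exp (-2 * (n * s) ^ 2 / Fintype.card (Fin n)) :=
      measureReal_card_mem_ge_le hy hind hmap measurableSet_Iic (by positivity)
    _ = exp (-2 * n * s ^ 2) := by
      rw [Fintype.card_fin]; congr 1; field_simp

theorem measureReal_abs_cdf_orderStat_sub_gt_le (hy : ∀ i, Measurable (y i))
    (hind : iIndepFun y μ) (hmap : ∀ i, μ.map (y i) = ν) (hk : 1 ≤ k) (hkn : k ≤ n)
    (hs : 0 < s) :
    μ.real {ω | s < |cdf ν (orderStat (fun i => y i ω) k) - k / n|} ≤
      2 * exp (-2 * n * s ^ 2) := by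
  have h_sub : {ω | s < |cdf ν (orderStat (fun i => y i ω) k) - k / n|} ⊆
      {ω | k / n + s < cdf ν (orderStat (fun i => y i ω) k)} ∪
        {ω | cdf ν (orderStat (fun i => y i ω) k) < k / n - s} := by
    intro ω hω
    rcases lt_abs.mp (Set.mem_ofPred_eq ▸ hω) with h | h
    · exact Or.inl (by simp only [Set.mem_ofPred_eq]; linarith)
    · exact Or.inr (by simp only [Set.mem_ofPred_eq]; linarith)
  calc _ ≤ _ := measureReal_mono h_sub
    _ ≤ _ := measureReal_union_le _ _
    _ ≤ exp (-2 * n * s ^ 2) + exp (-2 * n * s ^ 2) :=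
      add_le_add (measureReal_cdf_orderStat_gt_le hy hind hmap hk hkn hs)
        (measureReal_cdf_orderStat_lt_le hy hind hmap hk hkn hs)
    _ = 2 * exp (-2 * n * s ^ 2) := by ring

end OrderStatisticTails

theorem exists_abs_cdf_orderStat_sub_gt_of_slice (ν : Measure ℝ) [IsProbabilityMeasure ν]
    {H c : ℕ} (hc : 1 ≤ c) (v : Fin (H * c) → ℝ) {h : ℕ} (hh : h ∈ Icc 1 H) {ε : ℝ}
    (hε : ε < |ν.real (sirSlice H c v h) - 1 / H|) :
    ∃ j ∈ Icc 1 H, ε / 2 < |cdf ν (orderStat v (j * c)) - (j * c : ℕ) / (H * c : ℕ)| := by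
  obtain ⟨h_one_le, h_le_H⟩ := mem_Icc.mp hh
  have hc' : (c : ℝ) ≠ 0 := by exact_mod_cast (by omega : c ≠ 0)
  have hH' : (H : ℝ) ≠ 0 := by exact_mod_cast (by omega : H ≠ 0)
  have h_frac (j : ℕ) : ((j * c : ℕ) : ℝ) / (H * c : ℕ) = j / H := by
    push_cast; exact mul_div_mul_right _ _ hc'
  simp_rw [h_frac]
  unfold sirSlice at hε
  split_ifs at hε with h_first h_last
  · refine ⟨1, mem_Icc.mpr ⟨le_rfl, h_first ▸ h_le_H⟩, ?_⟩
    rw [one_mul, Nat.cast_one, cdf_eq_real]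
    linarith [abs_nonneg (ν.real (Set.Iic (orderStat v c)) - 1 / H)]
  · refine ⟨H - 1, mem_Icc.mpr ⟨by omega, by omega⟩, ?_⟩
    have h_Ioi : ν.real (Set.Ioi (orderStat v ((H - 1) * c))) - 1 / H =
        -(cdf ν (orderStat v ((H - 1) * c)) - (H - 1 : ℕ) / H) := by
      rw [← Set.compl_Iic, probReal_compl_eq_one_sub measurableSet_Iic, ← cdf_eq_real,
        Nat.cast_sub (by omega), Nat.cast_one]
      field_simp
      ring
    rw [h_Ioi, abs_neg] at hε
    linarith [abs_nonneg (cdf ν (orderStat v ((H - 1) * c)) - (H - 1 : ℕ) / H)]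
  · have h_mono : orderStat v ((h - 1) * c) ≤ orderStat v (h * c) :=
      orderStat_mono v (Nat.mul_pos (by omega) (by omega)) (by gcongr; omega) (by gcongr)
    rw [← Set.Iic_sdiff_Iic, measureReal_sdiff (Set.Iic_subset_Iic.mpr h_mono) measurableSet_Iic,
      ← cdf_eq_real, ← cdf_eq_real] at hε
    by_contra! h_close
    have h_upper := h_close h (mem_Icc.mpr ⟨h_one_le, h_le_H⟩)
    have h_lower := h_close (h - 1) (mem_Icc.mpr ⟨by omega, by omega⟩)
    rw [Nat.cast_sub (by omega), Nat.cast_one] at h_lower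
    have h_split : cdf ν (orderStat v (h * c)) - cdf ν (orderStat v ((h - 1) * c)) - 1 / H =
        (cdf ν (orderStat v (h * c)) - h / H) -
          (cdf ν (orderStat v ((h - 1) * c)) - (h - 1) / H) := by
      ring
    rw [h_split] at hε
    linarith [abs_sub (cdf ν (orderStat v (h * c)) - h / H)
      (cdf ν (orderStat v ((h - 1) * c)) - (h - 1) / H)]

theorem mul_two_mul_exp_le (H x ε : ℝ) (hH : 1 ≤ H) (hx : 1 ≤ x) :
    H * (2 * exp (-2 * x * (ε / 2) ^ 2)) ≤
      2 * H ^ 2 * √(x + 1) * exp (-(x + 1) * ε ^ 2 / 32) := by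
  have h_exp : exp (-2 * x * (ε / 2) ^ 2) ≤ exp (-(x + 1) * ε ^ 2 / 32) :=
    exp_le_exp.mpr (by nlinarith [sq_nonneg ε])
  have h_sqrt : 1 ≤ √(x + 1) := one_le_sqrt.mpr (by linarith)
  have h_H : H ≤ H ^ 2 * √(x + 1) := by nlinarith
  calc H * (2 * exp (-2 * x * (ε / 2) ^ 2))
      ≤ H ^ 2 * √(x + 1) * (2 * exp (-(x + 1) * ε ^ 2 / 32)) := by gcongr
    _ = _ := by ring

theorem stmt_10 :
    ∃ C : ℝ, 0 < C ∧ ∃ H₀ c₀ : ℕ, ∀ H c : ℕ, H₀ ≤ H → c₀ ≤ c →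
      ∀ (Ω : Type) (_ : MeasurableSpace Ω) (μ : Measure Ω), IsProbabilityMeasure μ →
      ∀ (f : ℝ → ℝ), Measurable f → (∀ t, 0 ≤ f t) → Continuous f →
      ∀ (y : Fin (H * c) → Ω → ℝ), (∀ i, Measurable (y i)) →
        iIndepFun y μ →
        (∀ i, Measure.map (y i) μ =
          volume.withDensity (fun t => ENNReal.ofReal (f t))) →
        ∀ ε : ℝ, 4 / ((H : ℝ) * c - 1) < ε →
          μ {ω | ∃ h ∈ Finset.Icc 1 H,
              ε < |(∫ t in sirSlice H c (fun i => y i ω) h, f t) - 1 / (H : ℝ)|} ≤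
            ENNReal.ofReal (C * H ^ 2 * Real.sqrt ((H : ℝ) * c + 1) *
              Real.exp (-((H : ℝ) * c + 1) * ε ^ 2 / 32)) := by
  refine ⟨2, two_pos, 1, 1, fun H c hH hc Ω _ μ _ f hf hf0 _ y hy hind hmap ε hε => ?_⟩
  set ν := volume.withDensity fun t => ENNReal.ofReal (f t)
  have hHc : 1 ≤ H * c := Nat.mul_le_mul hH hc
  have : IsProbabilityMeasure ν :=
    hmap ⟨0, hHc⟩ ▸ Measure.isProbabilityMeasure_map (hy _).aemeasurable
  have hε0 : 0 < ε := by
    refine lt_of_le_of_lt (div_nonneg zero_le_four ?_) hε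
    rw [sub_nonneg]; exact_mod_cast hHc
  have h_sub : {ω | ∃ h ∈ Icc 1 H,
      ε < |(∫ t in sirSlice H c (fun i => y i ω) h, f t) - 1 / (H : ℝ)|} ⊆
      ⋃ j ∈ Icc 1 H, {ω | ε / 2 <
        |cdf ν (orderStat (fun i => y i ω) (j * c)) - (j * c : ℕ) / (H * c : ℕ)|} := by
    rintro ω ⟨h, hh, h_far⟩
    rw [← measureReal_withDensity_ofReal hf.aestronglyMeasurable.restrict
      (ae_of_all _ hf0) (measurableSet_sirSlice ..)] at h_far
    simpa using exists_abs_cdf_orderStat_sub_gt_of_slice ν hc _ hh h_far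
  rw [ENNReal.le_ofReal_iff_toReal_le (measure_ne_top _ _) (by positivity)]
  calc μ.real _ ≤ _ := measureReal_mono h_sub (measure_ne_top _ _)
    _ ≤ ∑ j ∈ Icc 1 H, μ.real {ω | ε / 2 <
          |cdf ν (orderStat (fun i => y i ω) (j * c)) - (j * c : ℕ) / (H * c : ℕ)|} :=
      measureReal_biUnion_finset_le _ _
    _ ≤ ∑ _j ∈ Icc 1 H, 2 * exp (-2 * (H * c : ℕ) * (ε / 2) ^ 2) := by
      refine sum_le_sum fun j hj => ?_
      exact measureReal_abs_cdf_orderStat_sub_gt_le hy hind hmap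
        (Nat.mul_le_mul (mem_Icc.mp hj).1 hc) (Nat.mul_le_mul_right _ (mem_Icc.mp hj).2)
        (half_pos hε0)
    _ = H * (2 * exp (-2 * (H * c : ℝ) * (ε / 2) ^ 2)) := by simp
    _ ≤ _ := mul_two_mul_exp_le _ _ _ (by exact_mod_cast hH) (by exact_mod_cast hHc)
end

section
/- Let u, β ∈ ℝ^p with ‖β‖ = 1 and u ≠ 0, and let B = β uᵀ + u βᵀ. Fix 0 < α < arctan(1/16) and let x = cos(δ)β + sin(δ)η with η ⟂ β, ‖η‖ = 1, and 0 ≤ δ ≤ α. Then: (i) without assuming uᵀβ = 0, ‖Bx‖ ≥ cos(δ)‖u‖ − sin(δ)‖u‖ ≥ (1/2)cos(δ)‖u‖ ≥ (1/2)cos(α)‖u‖; and (ii) if additionally uᵀβ = 0, then |cos ∠(Bx, x)| = |xᵀBx|/(‖x‖‖Bx‖) ≤ 4δ ≤ 4α. -/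
open Matrix

/-- Euclidean norm of a vector of `ℝ^p`. -/
noncomputable def vnorm {p : ℕ} (v : Fin p → ℝ) : ℝ := Real.sqrt (v ⬝ᵥ v)

lemma dot_self_nonneg' {p : ℕ} (v : Fin p → ℝ) : 0 ≤ v ⬝ᵥ v :=
  Finset.sum_nonneg fun i _ => mul_self_nonneg _

lemma vnorm_sq' {p : ℕ} (v : Fin p → ℝ) : vnorm v ^ 2 = v ⬝ᵥ v := by
  rw [vnorm, Real.sq_sqrt (dot_self_nonneg' v)]

lemma vecMulVec_mulVec' {p : ℕ} (a b c : Fin p → ℝ) :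
    (vecMulVec a b).mulVec c = (b ⬝ᵥ c) • a := by
  ext i
  simp [mulVec, vecMulVec, dotProduct, Finset.mul_sum, mul_assoc, mul_comm, mul_left_comm]

lemma key_ineq (c s t r U nn : ℝ) (hc : 0 < c) (hs : 0 ≤ s) (hsc : s < (1/16) * c)
    (hB : t ^ 2 + r ^ 2 ≤ U) (hn2 : nn ^ 2 = U) :
    (c * nn - s * nn) ^ 2 ≤ (c * t + s * r) ^ 2 + 2 * (c * t + s * r) * c * t + c ^ 2 * U := by
  have hU : U = nn ^ 2 := hn2.symm
  subst hU
  linarith [mul_nonneg (mul_nonneg hc.le hs) (sq_nonneg (t + r)),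
    mul_nonneg (mul_nonneg hs (by linarith : (0:ℝ) ≤ 2 * c - s))
      (by linarith [sq_nonneg t] : (0:ℝ) ≤ nn ^ 2 - r ^ 2),
    mul_nonneg (mul_nonneg hc.le (by linarith : (0:ℝ) ≤ 3 * c - 2 * s)) (sq_nonneg t)]

theorem stmt_15 {p : ℕ} (u β η : Fin p → ℝ)
    (hβ : vnorm β = 1) (hη : vnorm η = 1) (hβη : β ⬝ᵥ η = 0) (hu : u ≠ 0)
    (α δ : ℝ) (hα0 : 0 < α) (hα : α < Real.arctan (1 / 16))
    (hδ0 : 0 ≤ δ) (hδα : δ ≤ α) :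
    let B : Matrix (Fin p) (Fin p) ℝ := vecMulVec β u + vecMulVec u β
    let x : Fin p → ℝ := Real.cos δ • β + Real.sin δ • η
    (Real.cos δ * vnorm u - Real.sin δ * vnorm u ≤ vnorm (B.mulVec x) ∧
      (1 / 2) * Real.cos δ * vnorm u ≤ Real.cos δ * vnorm u - Real.sin δ * vnorm u ∧
      (1 / 2) * Real.cos α * vnorm u ≤ vnorm (B.mulVec x)) ∧
    (u ⬝ᵥ β = 0 →
      |x ⬝ᵥ B.mulVec x| / (vnorm x * vnorm (B.mulVec x)) ≤ 4 * δ ∧ 4 * δ ≤ 4 * α) := by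
  intro B x
  set c := Real.cos δ with hc_def
  set s := Real.sin δ with hs_def
  set t := u ⬝ᵥ β with ht_def
  set r := u ⬝ᵥ η with hr_def
  have hx_def : x = c • β + s • η := rfl
  have hB_def : B = vecMulVec β u + vecMulVec u β := rfl
  clear_value B x
  -- trig facts
  have harc : Real.arctan (1/16) < Real.pi / 2 := Real.arctan_lt_pi_div_two _
  have hαpi : α < Real.pi / 2 := hα.trans harc
  have hδpi : δ < Real.pi / 2 := lt_of_le_of_lt hδα hαpi
  have hpi : 0 < Real.pi := Real.pi_pos
  have hc : 0 < c := Real.cos_pos_of_mem_Ioo ⟨by linarith, hδpi⟩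
  have hs : 0 ≤ s := Real.sin_nonneg_of_nonneg_of_le_pi hδ0 (by linarith)
  have htan : Real.tan δ < 1/16 := by
    have := Real.tan_lt_tan_of_nonneg_of_lt_pi_div_two hδ0 harc (lt_of_le_of_lt hδα hα)
    rwa [Real.tan_arctan] at this
  have hsc : s < (1/16) * c := by
    have h1 : Real.tan δ = s / c := Real.tan_eq_sin_div_cos δ
    have h2 : s / c < 1/16 := by rw [← h1]; exact htan
    calc s = (s / c) * c := by field_simp
    _ < (1/16) * c := by exact mul_lt_mul_of_pos_right h2 hc
  have hcα : Real.cos α ≤ c := Real.cos_le_cos_of_nonneg_of_le_pi hδ0 (by linarith) hδα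
  have hsδ : s ≤ δ := Real.sin_le hδ0
  -- dot product facts
  have hββ : β ⬝ᵥ β = 1 := by rw [← vnorm_sq', hβ]; norm_num
  have hηη : η ⬝ᵥ η = 1 := by rw [← vnorm_sq', hη]; norm_num
  have huu : 0 < u ⬝ᵥ u :=
    lt_of_le_of_ne (dot_self_nonneg' u) (fun h => hu (dotProduct_self_eq_zero.mp h.symm))
  set n := vnorm u with hn_def
  have hn0 : 0 < n := Real.sqrt_pos.mpr huu
  have hn2 : n ^ 2 = u ⬝ᵥ u := vnorm_sq' u
  have hηβ : η ⬝ᵥ β = 0 := by rw [dotProduct_comm]; exact hβη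
  -- Bessel
  have hBessel : t ^ 2 + r ^ 2 ≤ u ⬝ᵥ u := by
    have h := dot_self_nonneg' (u - t • β - r • η)
    have hexp : (u - t • β - r • η) ⬝ᵥ (u - t • β - r • η)
        = u ⬝ᵥ u - t ^ 2 - r ^ 2 := by
      simp only [sub_dotProduct, dotProduct_sub, smul_dotProduct, dotProduct_smul,
        smul_eq_mul, hββ, hηη, hβη, hηβ, dotProduct_comm β u, dotProduct_comm η u,
        ← ht_def, ← hr_def]
      ring
    rw [hexp] at h
    linarith
  -- compute Bx
  have hux : u ⬝ᵥ x = c * t + s * r := by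
    rw [hx_def]
    simp only [dotProduct_add, dotProduct_smul, smul_eq_mul, ← ht_def, ← hr_def]
  have hβx : β ⬝ᵥ x = c := by
    rw [hx_def]
    simp only [dotProduct_add, dotProduct_smul, smul_eq_mul, hββ, hβη]
    ring
  have hBx : B.mulVec x = (c * t + s * r) • β + c • u := by
    rw [hB_def, add_mulVec, vecMulVec_mulVec', vecMulVec_mulVec', hux, hβx]
  -- norm squared of Bx
  have hQ : (B.mulVec x) ⬝ᵥ (B.mulVec x)
      = (c * t + s * r) ^ 2 + 2 * (c * t + s * r) * c * t + c ^ 2 * (u ⬝ᵥ u) := by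
    rw [hBx]
    simp only [add_dotProduct, dotProduct_add, smul_dotProduct, dotProduct_smul,
      smul_eq_mul, hββ, dotProduct_comm β u, ← ht_def]
    ring
  set m := vnorm (B.mulVec x) with hm_def
  have hm0 : 0 ≤ m := Real.sqrt_nonneg _
  -- first inequality
  have h1 : c * n - s * n ≤ m := by
    have hposl : 0 < c * n - s * n := by
      have := mul_lt_mul_of_pos_right (show s < c by linarith) hn0
      linarith
    have hle : (c * n - s * n) ^ 2 ≤ (B.mulVec x) ⬝ᵥ (B.mulVec x) := by
      rw [hQ]
      exact key_ineq c s t r (u ⬝ᵥ u) n hc hs hsc hBessel hn2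
    exact (Real.le_sqrt hposl.le (dot_self_nonneg' _)).mpr hle
  have h2 : (1 / 2) * c * n ≤ c * n - s * n := by
    have := mul_le_mul_of_nonneg_right (show s ≤ (1/2) * c by linarith) hn0.le
    linarith
  have h3 : (1 / 2) * Real.cos α * n ≤ m := by
    have := mul_le_mul_of_nonneg_right hcα hn0.le
    linarith
  refine ⟨⟨h1, h2, h3⟩, fun htz => ?_⟩
  -- second part
  have ht0 : t = 0 := htz
  have hxx : x ⬝ᵥ x = 1 := by
    rw [hx_def]
    simp only [add_dotProduct, dotProduct_add, smul_dotProduct, dotProduct_smul,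
      smul_eq_mul, hββ, hηη, hβη, hηβ]
    linear_combination Real.sin_sq_add_cos_sq δ
  have hxn : vnorm x = 1 := by rw [vnorm, hxx, Real.sqrt_one]
  have hxBx : x ⬝ᵥ B.mulVec x = 2 * c * s * r := by
    rw [hBx, ht0]
    simp only [dotProduct_add, dotProduct_smul, smul_eq_mul,
      dotProduct_comm x β, dotProduct_comm x u, hβx, hux, ht0]
    ring
  have hr_le : |r| ≤ n := by
    rw [ht0] at hBessel
    have : |r| = Real.sqrt (r ^ 2) := (Real.sqrt_sq_eq_abs r).symm
    rw [this, hn_def, vnorm]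
    exact Real.sqrt_le_sqrt (by linarith)
  have hcosα : 0 < Real.cos α := Real.cos_pos_of_mem_Ioo ⟨by linarith, hαpi⟩
  have hmpos : 0 < m :=
    lt_of_lt_of_le (mul_pos (mul_pos (by norm_num) hcosα) hn0) h3
  constructor
  · rw [hxn, one_mul, div_le_iff₀ hmpos]
    have habs : |x ⬝ᵥ B.mulVec x| = 2 * c * s * |r| := by
      rw [hxBx, abs_mul, abs_of_nonneg (by positivity : (0:ℝ) ≤ 2 * c * s)]
    rw [habs]
    have hcm : (1 / 2) * Real.cos α * n ≤ m := h3
    have hcδm : (1 / 2) * c * n ≤ m := by linarith [h1, h2]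
    have e1 := mul_le_mul_of_nonneg_left hr_le
      (mul_nonneg (mul_nonneg (by norm_num : (0:ℝ) ≤ 2) hc.le) hs)
    have e2 := mul_le_mul_of_nonneg_left hcδm (show (0:ℝ) ≤ 4 * s by linarith)
    have e3 := mul_le_mul_of_nonneg_right (show 4 * s ≤ 4 * δ by linarith) hm0
    linarith [e1, e2, e3]
  · linarith
end
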